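/- (Degenerate Kundt frame functions, Theorem on ℓ-proper Kundt coframes.) On ℝ⁴ with coordinates (v,u,x,y), let M₁ : ℝ³ → ℂ be a smooth nowhere-vanishing function of (u,x,y), let M₀ = M₀⁽¹⁾(u,x,y)·v + M₀⁽⁰⁾(u,x,y) be complex-valued, and let H = H⁽²⁾(u,x,y)·v² + H⁽¹⁾(u,x,y)·v + H⁽⁰⁾(u,x,y), W₁ = W₁⁽¹⁾(u,x,y)·v + W₁⁽⁰⁾(u,x,y), W₂ = W₂⁽¹⁾(u,x,y)·v + W₂⁽⁰⁾(u,x,y) be real-valued, all coefficient functions smooth. Define the frame derivative operators D = ∂_v, δ = −((W₁ + iW₂)/(2·conj(M₁)))∂_v + (1/(2·conj(M₁)))(∂_x + i∂_y), and Δ = ∂_u + [ (Im(M₀·conj(M₁))·W₂ + Re(M₀·conj(M₁))·W₁)/|M₁|² − H ]∂_v − [Re(M₀·conj(M₁))/|M₁|²]∂_x − [Im(M₀·conj(M₁))/|M₁|²]∂_y. Let E = E⁽¹⁾(u,x,y)·v + E⁽⁰⁾(u,x,y) be real-valued with E⁽¹⁾ nowhere zero. Then δE = 0 and ΔE = 0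 hold identically on ℝ⁴ if and only if W₁⁽¹⁾ = (∂_x E⁽¹⁾)/E⁽¹⁾, W₂⁽¹⁾ = (∂_y E⁽¹⁾)/E⁽¹⁾, W₁⁽⁰⁾ = (∂_x E⁽⁰⁾)/E⁽¹⁾, W₂⁽⁰⁾ = (∂_y E⁽⁰⁾)/E⁽¹⁾, H⁽²⁾ = 0, H⁽¹⁾ = (∂_u E⁽¹⁾)/E⁽¹⁾, and H⁽⁰⁾ = (∂_u E⁽⁰⁾)/E⁽¹⁾ (and M₀ is unconstrained); moreover for real E the conjugate equation conj(δ)E = 0 follows from δE = 0. -/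

import Mathlib

open Complex

/-- `∂_v E` for `E = E1(u,x,y)·v + E0(u,x,y)`. -/
noncomputable def dEv (E1 E0 : ℝ → ℝ → ℝ → ℝ) (v u x y : ℝ) : ℝ :=
  deriv (fun s => E1 u x y * s + E0 u x y) v

/-- `∂_u E` for `E = E1(u,x,y)·v + E0(u,x,y)`. -/
noncomputable def dEu (E1 E0 : ℝ → ℝ → ℝ → ℝ) (v u x y : ℝ) : ℝ :=
  deriv (fun s => E1 s x y * v + E0 s x y) u

/-- `∂_x E` for `E = E1(u,x,y)·v + E0(u,x,y)`. -/
noncomputable def dEx (E1 E0 : ℝ → ℝ → ℝ → ℝ) (v u x y : ℝ) : ℝ :=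
  deriv (fun s => E1 u s y * v + E0 u s y) x

/-- `∂_y E` for `E = E1(u,x,y)·v + E0(u,x,y)`. -/
noncomputable def dEy (E1 E0 : ℝ → ℝ → ℝ → ℝ) (v u x y : ℝ) : ℝ :=
  deriv (fun s => E1 u x s * v + E0 u x s) y

/-- `δE`, where `δ = −((W₁+iW₂)/(2·conj M₁))∂_v + (1/(2·conj M₁))(∂_x + i∂_y)` and
`E = E1·v + E0`, `W₁ = W11·v + W10`, `W₂ = W21·v + W20`. -/
noncomputable def deltaE (M1 : ℝ → ℝ → ℝ → ℂ) (W11 W10 W21 W20 E1 E0 : ℝ → ℝ → ℝ → ℝ)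
    (v u x y : ℝ) : ℂ :=
  -((((W11 u x y * v + W10 u x y : ℝ) : ℂ) + Complex.I * ((W21 u x y * v + W20 u x y : ℝ) : ℂ)) /
      (2 * (starRingEnd ℂ) (M1 u x y))) * ((dEv E1 E0 v u x y : ℝ) : ℂ)
  + (1 / (2 * (starRingEnd ℂ) (M1 u x y))) *
      (((dEx E1 E0 v u x y : ℝ) : ℂ) + Complex.I * ((dEy E1 E0 v u x y : ℝ) : ℂ))

/-- `conj(δ)E`, where `conj(δ) = −((W₁−iW₂)/(2M₁))∂_v + (1/(2M₁))(∂_x − i∂_y)`. -/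
noncomputable def deltaBarE (M1 : ℝ → ℝ → ℝ → ℂ) (W11 W10 W21 W20 E1 E0 : ℝ → ℝ → ℝ → ℝ)
    (v u x y : ℝ) : ℂ :=
  -((((W11 u x y * v + W10 u x y : ℝ) : ℂ) - Complex.I * ((W21 u x y * v + W20 u x y : ℝ) : ℂ)) /
      (2 * M1 u x y)) * ((dEv E1 E0 v u x y : ℝ) : ℂ)
  + (1 / (2 * M1 u x y)) *
      (((dEx E1 E0 v u x y : ℝ) : ℂ) - Complex.I * ((dEy E1 E0 v u x y : ℝ) : ℂ))

/-- `ΔE`, where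
`Δ = ∂_u + [(Im(M₀·conj M₁)·W₂ + Re(M₀·conj M₁)·W₁)/|M₁|² − H]∂_v
  − [Re(M₀·conj M₁)/|M₁|²]∂_x − [Im(M₀·conj M₁)/|M₁|²]∂_y`,
with `M₀ = M01·v + M00` and `H = H2·v² + H1·v + H0`. -/
noncomputable def DeltaE (M1 M01 M00 : ℝ → ℝ → ℝ → ℂ)
    (W11 W10 W21 W20 H2 H1 H0 E1 E0 : ℝ → ℝ → ℝ → ℝ) (v u x y : ℝ) : ℝ :=
  dEu E1 E0 v u x y
  + ((((M01 u x y * (v : ℂ) + M00 u x y) * (starRingEnd ℂ) (M1 u x y)).im *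
        (W21 u x y * v + W20 u x y)
      + ((M01 u x y * (v : ℂ) + M00 u x y) * (starRingEnd ℂ) (M1 u x y)).re *
        (W11 u x y * v + W10 u x y)) / Complex.normSq (M1 u x y)
     - (H2 u x y * v ^ 2 + H1 u x y * v + H0 u x y)) * dEv E1 E0 v u x y
  - (((M01 u x y * (v : ℂ) + M00 u x y) * (starRingEnd ℂ) (M1 u x y)).re /
      Complex.normSq (M1 u x y)) * dEx E1 E0 v u x y
  - (((M01 u x y * (v : ℂ) + M00 u x y) * (starRingEnd ℂ) (M1 u x y)).im /
      Complex.normSq (M1 u x y)) * dEy E1 E0 v u x y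

/-- Smoothness of a real-valued function of three real variables. -/
def Smooth3R (F : ℝ → ℝ → ℝ → ℝ) : Prop :=
  ContDiff ℝ (⊤ : ℕ∞) fun p : ℝ × ℝ × ℝ => F p.1 p.2.1 p.2.2

/-- Smoothness of a complex-valued function of three real variables. -/
def Smooth3C (F : ℝ → ℝ → ℝ → ℂ) : Prop :=
  ContDiff ℝ (⊤ : ℕ∞) fun p : ℝ × ℝ × ℝ => F p.1 p.2.1 p.2.2


lemma diffSlice1 {F : ℝ → ℝ → ℝ → ℝ} (hF : Smooth3R F) (x y : ℝ) :
    Differentiable ℝ (fun s => F s x y) :=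
  (hF.differentiable (by simp)).comp (differentiable_id.prodMk
    ((differentiable_const x).prodMk (differentiable_const y)))

lemma diffSlice2 {F : ℝ → ℝ → ℝ → ℝ} (hF : Smooth3R F) (u y : ℝ) :
    Differentiable ℝ (fun s => F u s y) :=
  (hF.differentiable (by simp)).comp ((differentiable_const u).prodMk
    (differentiable_id.prodMk (differentiable_const y)))

lemma diffSlice3 {F : ℝ → ℝ → ℝ → ℝ} (hF : Smooth3R F) (u x : ℝ) :
    Differentiable ℝ (fun s => F u x s) :=
  (hF.differentiable (by simp)).comp ((differentiable_const u).prodMk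
    ((differentiable_const x).prodMk differentiable_id))

lemma complexSplit (A B E X Y : ℝ) (c : ℂ) (hc : c ≠ 0) :
    (-((((A:ℝ):ℂ) + Complex.I*((B:ℝ):ℂ))/c)*((E:ℝ):ℂ)
      + (1/c)*(((X:ℝ):ℂ) + Complex.I*((Y:ℝ):ℂ)) = 0) ↔
      (X = A*E ∧ Y = B*E) := by
  have key : (-((((A:ℝ):ℂ) + Complex.I*((B:ℝ):ℂ))/c)*((E:ℝ):ℂ)
      + (1/c)*(((X:ℝ):ℂ) + Complex.I*((Y:ℝ):ℂ)))
      = (1/c) * (((X - A*E : ℝ):ℂ) + Complex.I*((Y - B*E : ℝ):ℂ)) := by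
    push_cast; field_simp; ring
  rw [key, mul_eq_zero]
  simp [hc, Complex.ext_iff, sub_eq_zero]

/-- for the degenerate Kundt coframe with frame functions polynomial in `v` and a
real null-rotation parameter `E = E⁽¹⁾v + E⁽⁰⁾` with `E⁽¹⁾` nowhere zero, the equations
`δE = 0` and `ΔE = 0` hold identically if and only if the frame functions are given by the
explicit formulas of Theorem `thm:ImproperDKundt`; moreover for real `E` the conjugate equation
`conj(δ)E = 0` follows from `δE = 0`. -/
theorem degenerate_Kundt_frame_functions
    (M1 M01 M00 : ℝ → ℝ → ℝ → ℂ)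
    (H2 H1 H0 W11 W10 W21 W20 E1 E0 : ℝ → ℝ → ℝ → ℝ)
    (hM1s : Smooth3C M1) (hM01s : Smooth3C M01) (hM00s : Smooth3C M00)
    (hH2s : Smooth3R H2) (hH1s : Smooth3R H1) (hH0s : Smooth3R H0)
    (hW11s : Smooth3R W11) (hW10s : Smooth3R W10)
    (hW21s : Smooth3R W21) (hW20s : Smooth3R W20)
    (hE1s : Smooth3R E1) (hE0s : Smooth3R E0)
    (hM1 : ∀ u x y, M1 u x y ≠ 0) (hE1 : ∀ u x y, E1 u x y ≠ 0) :
    (((∀ v u x y : ℝ, deltaE M1 W11 W10 W21 W20 E1 E0 v u x y = 0) ∧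
      (∀ v u x y : ℝ, DeltaE M1 M01 M00 W11 W10 W21 W20 H2 H1 H0 E1 E0 v u x y = 0)) ↔
      (∀ u x y : ℝ,
        W11 u x y = deriv (fun s => E1 u s y) x / E1 u x y ∧
        W21 u x y = deriv (fun s => E1 u x s) y / E1 u x y ∧
        W10 u x y = deriv (fun s => E0 u s y) x / E1 u x y ∧
        W20 u x y = deriv (fun s => E0 u x s) y / E1 u x y ∧
        H2 u x y = 0 ∧
        H1 u x y = deriv (fun s => E1 s x y) u / E1 u x y ∧
        H0 u x y = deriv (fun s => E0 s x y) u / E1 u x y)) ∧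
    ((∀ v u x y : ℝ, deltaE M1 W11 W10 W21 W20 E1 E0 v u x y = 0) →
      (∀ v u x y : ℝ, deltaBarE M1 W11 W10 W21 W20 E1 E0 v u x y = 0)) := by
  
  -- explicit formulas for the frame derivatives of E
  have hdEv : ∀ v u x y : ℝ, dEv E1 E0 v u x y = E1 u x y := fun v u x y => by
    unfold dEv
    simpa using (((hasDerivAt_id v).const_mul (E1 u x y)).add_const (E0 u x y)).deriv
  have hdEx : ∀ v u x y : ℝ, dEx E1 E0 v u x y
      = deriv (fun s => E1 u s y) x * v + deriv (fun s => E0 u s y) x := fun v u x y => by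
    unfold dEx
    rw [deriv_fun_add ((diffSlice2 hE1s u y x).mul_const v) (diffSlice2 hE0s u y x),
      deriv_mul_const (diffSlice2 hE1s u y x)]
  have hdEy : ∀ v u x y : ℝ, dEy E1 E0 v u x y
      = deriv (fun s => E1 u x s) y * v + deriv (fun s => E0 u x s) y := fun v u x y => by
    unfold dEy
    rw [deriv_fun_add ((diffSlice3 hE1s u x y).mul_const v) (diffSlice3 hE0s u x y),
      deriv_mul_const (diffSlice3 hE1s u x y)]
  have hdEu : ∀ v u x y : ℝ, dEu E1 E0 v u x y
      = deriv (fun s => E1 s x y) u * v + deriv (fun s => E0 s x y) u := fun v u x y => by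
    unfold dEu
    rw [deriv_fun_add ((diffSlice1 hE1s x y u).mul_const v) (diffSlice1 hE0s x y u),
      deriv_mul_const (diffSlice1 hE1s x y u)]
  have hc : ∀ u x y : ℝ, (2 : ℂ) * (starRingEnd ℂ) (M1 u x y) ≠ 0 := fun u x y =>
    mul_ne_zero two_ne_zero ((map_ne_zero _).mpr (hM1 u x y))
  have hN : ∀ u x y : ℝ, Complex.normSq (M1 u x y) ≠ 0 := fun u x y =>
    (Complex.normSq_pos.mpr (hM1 u x y)).ne'
  -- characterization of δE = 0
  have hchar : ∀ v u x y : ℝ, deltaE M1 W11 W10 W21 W20 E1 E0 v u x y = 0 ↔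
      (deriv (fun s => E1 u s y) x * v + deriv (fun s => E0 u s y) x
          = (W11 u x y * v + W10 u x y) * E1 u x y ∧
        deriv (fun s => E1 u x s) y * v + deriv (fun s => E0 u x s) y
          = (W21 u x y * v + W20 u x y) * E1 u x y) := by
    intro v u x y
    unfold deltaE
    rw [hdEv, hdEx, hdEy]
    exact complexSplit _ _ _ _ _ _ (hc u x y)
  -- reduction of ΔE given the W relations
  have hred : ∀ u x y : ℝ,
      deriv (fun s => E1 u s y) x = W11 u x y * E1 u x y →
      deriv (fun s => E0 u s y) x = W10 u x y * E1 u x y →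
      deriv (fun s => E1 u x s) y = W21 u x y * E1 u x y →
      deriv (fun s => E0 u x s) y = W20 u x y * E1 u x y →
      ∀ v : ℝ, DeltaE M1 M01 M00 W11 W10 W21 W20 H2 H1 H0 E1 E0 v u x y
        = deriv (fun s => E1 s x y) u * v + deriv (fun s => E0 s x y) u
          - (H2 u x y * v ^ 2 + H1 u x y * v + H0 u x y) * E1 u x y := by
    intro u x y h1 h2 h3 h4 v
    unfold DeltaE
    rw [hdEu, hdEv, hdEx, hdEy, h1, h2, h3, h4]
    field_simp [hN u x y]
    ring
  constructor
  · constructor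
    · rintro ⟨hδ, hΔ⟩ u x y
      have hW := fun v => (hchar v u x y).mp (hδ v u x y)
      have he0x : deriv (fun s => E0 u s y) x = W10 u x y * E1 u x y := by
        have := (hW 0).1; simpa using this
      have he0y : deriv (fun s => E0 u x s) y = W20 u x y * E1 u x y := by
        have := (hW 0).2; simpa using this
      have he1x : deriv (fun s => E1 u s y) x = W11 u x y * E1 u x y := by
        have h1 := (hW 1).1; rw [he0x] at h1; linarith [h1]
      have he1y : deriv (fun s => E1 u x s) y = W21 u x y * E1 u x y := by
        have h1 := (hW 1).2; rw [he0y] at h1; linarith [h1]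
      have hH := fun v : ℝ => by
        have := hΔ v u x y
        rw [hred u x y he1x he0x he1y he0y v] at this
        exact this
      have h0 := hH 0
      have hp := hH 1
      have hm := hH (-1)
      simp only [mul_zero, zero_add, mul_one, mul_neg_one] at h0 hp hm
      have hH2 : H2 u x y = 0 := by
        have : H2 u x y * E1 u x y = 0 := by nlinarith [h0, hp, hm]
        rcases mul_eq_zero.mp this with h | h
        · exact h
        · exact absurd h (hE1 u x y)
      have hH0 : H0 u x y * E1 u x y = deriv (fun s => E0 s x y) u := by nlinarith [h0]
      have hH1 : H1 u x y * E1 u x y = deriv (fun s => E1 s x y) u := by nlinarith [hp, h0, hH2]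
      refine ⟨?_, ?_, ?_, ?_, hH2, ?_, ?_⟩ <;> rw [eq_div_iff (hE1 u x y)]
      · exact he1x.symm
      · exact he1y.symm
      · exact he0x.symm
      · exact he0y.symm
      · exact hH1
      · exact hH0
    · intro h
      have prod : ∀ u x y : ℝ,
          deriv (fun s => E1 u s y) x = W11 u x y * E1 u x y ∧
          deriv (fun s => E0 u s y) x = W10 u x y * E1 u x y ∧
          deriv (fun s => E1 u x s) y = W21 u x y * E1 u x y ∧
          deriv (fun s => E0 u x s) y = W20 u x y * E1 u x y ∧
          H2 u x y = 0 ∧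
          deriv (fun s => E1 s x y) u = H1 u x y * E1 u x y ∧
          deriv (fun s => E0 s x y) u = H0 u x y * E1 u x y := by
        intro u x y
        obtain ⟨w1, w2, w3, w4, h2, h1', h0'⟩ := h u x y
        refine ⟨?_, ?_, ?_, ?_, h2, ?_, ?_⟩
        · rw [w1, div_mul_cancel₀ _ (hE1 u x y)]
        · rw [w3, div_mul_cancel₀ _ (hE1 u x y)]
        · rw [w2, div_mul_cancel₀ _ (hE1 u x y)]
        · rw [w4, div_mul_cancel₀ _ (hE1 u x y)]
        · rw [h1', div_mul_cancel₀ _ (hE1 u x y)]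
        · rw [h0', div_mul_cancel₀ _ (hE1 u x y)]
      constructor
      · intro v u x y
        obtain ⟨w1, w2, w3, w4, _, _, _⟩ := prod u x y
        rw [hchar v u x y]
        constructor
        · rw [w1, w2]; ring
        · rw [w3, w4]; ring
      · intro v u x y
        obtain ⟨w1, w2, w3, w4, h2, h1', h0'⟩ := prod u x y
        rw [hred u x y w1 w2 w3 w4 v, h2, h1', h0']
        ring
  · intro hδ v u x y
    have hconj : deltaBarE M1 W11 W10 W21 W20 E1 E0 v u x y
        = (starRingEnd ℂ) (deltaE M1 W11 W10 W21 W20 E1 E0 v u x y) := by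
      simp only [deltaE, deltaBarE, map_add, map_neg, map_mul, map_div₀, map_one, map_ofNat,
        Complex.conj_ofReal, Complex.conj_I, Complex.conj_conj]
      ring
    rw [hconj, hδ, map_zero]
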